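/- arXiv:1612.08565 — 2 statements merged into one kernel-verified Lean document; each statement's English description precedes it below -/
import Mathlib

section
/- Let a < b be real numbers, f : ℝ → ℝ continuous and nonnegative on [a,b], and α > 0. Suppose [c,d] ⊆ [a,b] with a < c, d < b and c < d satisfies ∫_c^d f(x)² dx ≥ α, and suppose [c,d] has minimal length among all closed subintervals of [a,b] whose integral of f² is at least α, i.e. for every [c',d'] ⊆ [a,b] with ∫_{c'}^{d'} f² ≥ α one has d' − c' ≥ d − c. Then f(c) = f(d). -/
open MeasureTheory Set

private lemma slide_aux (a b c d α : ℝ) (hα : 0 < α) (f : ℝ → ℝ)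
    (hf : ContinuousOn f (Set.Icc a b))
    (hac : a < c) (hcd : c < d) (hdb : d < b)
    (hmass : ∫ x in c..d, f x ^ 2 ≥ α)
    (hmin : ∀ c' d' : ℝ, a ≤ c' → c' ≤ d' → d' ≤ b →
      (∫ x in c'..d', f x ^ 2) ≥ α → d - c ≤ d' - c') :
    ¬ (f c ^ 2 < f d ^ 2) := by
  intro hlt
  set g : ℝ → ℝ := fun x => f x ^ 2 with hgdef
  have hgc : ContinuousOn g (Set.Icc a b) := hf.pow 2
  have hab : a ≤ b := le_of_lt (hac.trans (hcd.trans hdb))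
  have hint : ∀ u v : ℝ, a ≤ u → u ≤ v → v ≤ b → IntervalIntegrable g volume u v :=
    fun u v hu huv hv =>
      (hgc.mono (Set.Icc_subset_Icc hu hv)).intervalIntegrable_of_Icc huv
  have lowerB : ∀ u v m : ℝ, a ≤ u → u ≤ v → v ≤ b →
      (∀ x ∈ Set.Icc u v, m ≤ g x) → m * (v - u) ≤ ∫ x in u..v, g x := by
    intro u v m hu huv hv hm
    have h1 : (∫ _ in u..v, m) ≤ ∫ x in u..v, g x :=
      intervalIntegral.integral_mono_on huv intervalIntegrable_const (hint u v hu huv hv) hm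
    simpa [intervalIntegral.integral_const, smul_eq_mul, mul_comm] using h1
  have upperB : ∀ u v M : ℝ, a ≤ u → u ≤ v → v ≤ b →
      (∀ x ∈ Set.Icc u v, g x ≤ M) → (∫ x in u..v, g x) ≤ M * (v - u) := by
    intro u v M hu huv hv hM
    have h1 : (∫ x in u..v, g x) ≤ ∫ _ in u..v, M :=
      intervalIntegral.integral_mono_on huv (hint u v hu huv hv) intervalIntegrable_const hM
    simpa [intervalIntegral.integral_const, smul_eq_mul, mul_comm] using h1
  -- global bound K
  obtain ⟨x0, hx0, hmax⟩ :=
    (isCompact_Icc : IsCompact (Set.Icc a b)).exists_isMaxOn ⟨a, Set.left_mem_Icc.2 hab⟩ hgc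
  set K : ℝ := g x0 + 1 with hKdef
  have hK : 0 < K := by
    have : (0:ℝ) ≤ g x0 := sq_nonneg _
    linarith
  have hKb : ∀ x ∈ Set.Icc a b, g x ≤ K := fun x hx =>
    (hmax hx).trans (by linarith)
  -- epsilon
  set ε : ℝ := g d - g c with hεdef
  have hε : 0 < ε := by
    have e1 : g c = f c ^ 2 := rfl
    have e2 : g d = f d ^ 2 := rfl
    simp only [hεdef]; linarith [hlt]
  -- continuity at c and d
  have hcc : ContinuousAt g c :=
    hgc.continuousAt (Icc_mem_nhds hac (hcd.trans hdb))
  have hcd' : ContinuousAt g d :=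
    hgc.continuousAt (Icc_mem_nhds (hac.trans hcd) hdb)
  obtain ⟨δ1, hδ1, h1⟩ := Metric.continuousAt_iff.1 hcc (ε/4) (by linarith)
  obtain ⟨δ2, hδ2, h2⟩ := Metric.continuousAt_iff.1 hcd' (ε/4) (by linarith)
  -- choose t
  set t : ℝ := min (min δ1 δ2) (b - d) / 2 with htdef
  have ht : 0 < t := by
    have : 0 < min (min δ1 δ2) (b - d) := lt_min (lt_min hδ1 hδ2) (by linarith)
    simpa [htdef] using half_pos this
  have ht1 : t < δ1 := by
    have h := min_le_left (min δ1 δ2) (b - d)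
    have h' := min_le_left δ1 δ2
    simp only [htdef]; linarith
  have ht2 : t < δ2 := by
    have h := min_le_left (min δ1 δ2) (b - d)
    have h' := min_le_right δ1 δ2
    simp only [htdef]; linarith
  have htb : d + t ≤ b := by
    have h := min_le_right (min δ1 δ2) (b - d)
    simp only [htdef]; linarith
  -- pointwise bounds on the two sliding pieces
  have hup : ∀ x ∈ Set.Icc c (c + t), g x ≤ g c + ε/4 := by
    intro x hx
    have hd : dist x c < δ1 := by
      rw [Real.dist_eq, abs_lt]
      constructor <;> [linarith [hx.1]; linarith [hx.2]]
    have := h1 hd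
    rw [Real.dist_eq, abs_lt] at this
    linarith [this.1, this.2]
  have hlo : ∀ x ∈ Set.Icc d (d + t), g d - ε/4 ≤ g x := by
    intro x hx
    have hd : dist x d < δ2 := by
      rw [Real.dist_eq, abs_lt]
      constructor <;> [linarith [hx.1]; linarith [hx.2]]
    have := h2 hd
    rw [Real.dist_eq, abs_lt] at this
    linarith [this.1, this.2]
  -- integral estimates
  have I1 : (∫ x in c..(c+t), g x) ≤ (g c + ε/4) * t := by
    have := upperB c (c+t) (g c + ε/4) hac.le (by linarith) (by linarith) hup
    simpa using this
  have I2 : (g d - ε/4) * t ≤ ∫ x in d..(d+t), g x := by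
    have := lowerB d (d+t) (g d - ε/4) (by linarith) (by linarith) htb hlo
    simpa using this
  -- splitting
  have e1 : (∫ x in c..(c+t), g x) + (∫ x in (c+t)..(d+t), g x) = ∫ x in c..(d+t), g x :=
    intervalIntegral.integral_add_adjacent_intervals
      (hint c (c+t) hac.le (by linarith) (by linarith))
      (hint (c+t) (d+t) (by linarith) (by linarith) htb)
  have e2 : (∫ x in c..d, g x) + (∫ x in d..(d+t), g x) = ∫ x in c..(d+t), g x :=
    intervalIntegral.integral_add_adjacent_intervals
      (hint c d hac.le hcd.le (by linarith))
      (hint d (d+t) (by linarith) (by linarith) htb)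
  have hstep : α + t * ε / 2 ≤ ∫ x in (c+t)..(d+t), g x := by
    have key : (g d - ε/4) * t - (g c + ε/4) * t = t * ε / 2 := by
      rw [hεdef]; ring
    have hm : (∫ x in c..d, g x) ≥ α := hmass
    linarith
  -- choose s and shrink
  set s : ℝ := min (t * ε / (2 * K)) (d - c) with hsdef
  have hs : 0 < s := by
    apply lt_min
    · positivity
    · linarith
  have hsd : s ≤ d - c := min_le_right _ _
  have hsK : K * s ≤ t * ε / 2 := by
    have h : s ≤ t * ε / (2 * K) := min_le_left _ _
    have h2 : K * s ≤ K * (t * ε / (2 * K)) := mul_le_mul_of_nonneg_left h hK.le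
    have e : K * (t * ε / (2 * K)) = t * ε / 2 := by
      field_simp
    linarith
  have I3 : (∫ x in (d+t-s)..(d+t), g x) ≤ K * s := by
    have := upperB (d+t-s) (d+t) K (by linarith) (by linarith) htb
      (fun x hx => hKb x ⟨by linarith [hx.1], le_trans hx.2 htb⟩)
    simpa using this
  have e3 : (∫ x in (c+t)..(d+t-s), g x) + (∫ x in (d+t-s)..(d+t), g x)
      = ∫ x in (c+t)..(d+t), g x :=
    intervalIntegral.integral_add_adjacent_intervals
      (hint (c+t) (d+t-s) (by linarith) (by linarith) (by linarith))
      (hint (d+t-s) (d+t) (by linarith) (by linarith) htb)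
  have hfinal : (∫ x in (c+t)..(d+t-s), g x) ≥ α := by
    set A := (∫ x in (c+t)..(d+t-s), g x) with hA
    set B := (∫ x in (d+t-s)..(d+t), g x) with hB
    set C := (∫ x in (c+t)..(d+t), g x) with hC
    clear_value A B C s t ε K
    linarith only [hstep, e3, I3, hsK, hε, ht]
  have := hmin (c+t) (d+t-s) (by linarith) (by linarith) (by linarith) hfinal
  linarith

/-- Sliding argument: if `[c,d]` is a closed subinterval of `[a,b]` of minimal length
among those capturing `L²`-mass at least `α` of a continuous nonnegative function `f`,
and there is room to slide on both sides (`a < c`, `d < b`), then `f` takes the same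
value at both endpoints of `[c,d]`. -/
theorem minimal_interval_equal_endpoint_values
    (a b c d α : ℝ) (hα : 0 < α)
    (f : ℝ → ℝ) (hf : ContinuousOn f (Set.Icc a b))
    (hfpos : ∀ x ∈ Set.Icc a b, 0 ≤ f x)
    (hac : a < c) (hcd : c < d) (hdb : d < b)
    (hmass : ∫ x in c..d, f x ^ 2 ≥ α)
    (hmin : ∀ c' d' : ℝ, a ≤ c' → c' ≤ d' → d' ≤ b →
      (∫ x in c'..d', f x ^ 2) ≥ α → d - c ≤ d' - c') :
    f c = f d := by
  have h1 : ¬ (f c ^ 2 < f d ^ 2) :=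
    slide_aux a b c d α hα f hf hac hcd hdb hmass hmin
  -- reflected version
  have h2 : ¬ (f d ^ 2 < f c ^ 2) := by
    have hfF : ContinuousOn (fun x => f (-x)) (Set.Icc (-b) (-a)) := by
      apply hf.comp continuous_neg.continuousOn
      intro x hx
      simp only [Set.mem_Icc] at hx ⊢
      constructor <;> linarith [hx.1, hx.2]
    have hmassF : (∫ x in (-d)..(-c), (fun y => f (-y)) x ^ 2) ≥ α := by
      have := intervalIntegral.integral_comp_neg (fun y => f y ^ 2) (a := -d) (b := -c)
      simp only [neg_neg] at this
      simpa [this] using hmass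
    have hminF : ∀ c' d' : ℝ, -b ≤ c' → c' ≤ d' → d' ≤ -a →
        (∫ x in c'..d', (fun y => f (-y)) x ^ 2) ≥ α → (-c) - (-d) ≤ d' - c' := by
      intro c' d' hbc' hc'd' hd'a hI
      have hI' : (∫ x in (-d')..(-c'), f x ^ 2) ≥ α := by
        have := intervalIntegral.integral_comp_neg (fun y => f y ^ 2) (a := c') (b := d')
        simpa [this] using hI
      have := hmin (-d') (-c') (by linarith) (by linarith) (by linarith) hI'
      linarith
    have := slide_aux (-b) (-a) (-d) (-c) α hα (fun x => f (-x)) hfF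
      (by linarith) (by linarith) (by linarith) hmassF hminF
    simpa using this
  have heq : f c ^ 2 = f d ^ 2 := le_antisymm (not_lt.1 h2) (not_lt.1 h1)
  exact (sq_eq_sq₀ (hfpos c ⟨hac.le, (hcd.trans hdb).le⟩)
    (hfpos d ⟨(hac.trans hcd).le, hdb.le⟩)).1 heq
end

section
/- Let j₁ < j₂ be real numbers, set L = j₂ − j₁, and let f : ℝ → ℝ be continuously differentiable and nonnegative on [j₁, j₂] with f(j₁) = f(j₂) = ε. Let α > 0 and 0 < β < π², and suppose ∫_{j₁}^{j₂} f(x)² dx = α and ∫_{j₁}^{j₂} f'(x)² dx ≤ αβ/L². Then ε ≥ (√α / (2√L)) · (1 − β/π²). -/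
/-!
Put `g = f - ε`, which vanishes at both endpoints. Expanding the square,
`∫ g² = α - 2ε ∫ f + ε² L ≥ α - 2ε √(Lα)` by Cauchy–Schwarz, while Wirtinger's inequality
gives `(π/L)² ∫ g² ≤ ∫ f'² ≤ αβ/L²`. Hence `π² (α - 2ε √(Lα)) ≤ αβ`, which is the claim.

Wirtinger's inequality is proved through a Riccati substitution: if `w' + w² ≤ -c` then
`g'² - c g² - (g² w)' = (g' - w g)² + g² (-(w' + w²) - c) ≥ 0`, and `(g² w)'` integrates to zero.
For `K < π / L` the choice `w = K cot θ`, with `θ` affine of slope `K` and `sin θ > 0` on the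
whole closed interval, satisfies `w' + w² = -K²`; letting `K → π / L` gives the sharp constant.
-/

open MeasureTheory Set Real Filter Topology

section Wirtinger

variable {a b : ℝ} {g g' : ℝ → ℝ}

theorem mul_integral_sq_le_integral_deriv_sq_of_riccati {c : ℝ} {w w' : ℝ → ℝ} (hab : a ≤ b)
    (hg : ∀ x ∈ Icc a b, HasDerivAt g (g' x) x) (hw : ∀ x ∈ Icc a b, HasDerivAt w (w' x) x)
    (hg'c : ContinuousOn g' (Icc a b)) (hw'c : ContinuousOn w' (Icc a b))
    (hric : ∀ x ∈ Icc a b, c ≤ -(w' x + w x ^ 2)) (hga : g a = 0) (hgb : g b = 0) :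
    c * ∫ x in a..b, g x ^ 2 ≤ ∫ x in a..b, g' x ^ 2 := by
  have hgc : ContinuousOn g (Icc a b) := fun x hx => (hg x hx).continuousAt.continuousWithinAt
  have hwc : ContinuousOn w (Icc a b) := fun x hx => (hw x hx).continuousAt.continuousWithinAt
  set D : ℝ → ℝ := fun x => 2 * g x * g' x * w x + g x ^ 2 * w' x
  have hD : ∀ x ∈ uIcc a b, HasDerivAt (fun x => g x ^ 2 * w x) (D x) x := by
    intro x hx
    rw [uIcc_of_le hab] at hx
    exact (((hg x hx).fun_pow 2).fun_mul (hw x hx)).congr_deriv (by simp only [D]; ring)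
  have hDc : ContinuousOn D (Icc a b) := by fun_prop
  have hD0 : ∫ x in a..b, D x = 0 := by
    rw [intervalIntegral.integral_eq_sub_of_hasDerivAt hD (hDc.intervalIntegrable_of_Icc hab)]
    simp [hga, hgb]
  have hg2 : ContinuousOn (fun x => g x ^ 2) (Icc a b) := hgc.pow 2
  have hpt : ∀ x ∈ Icc a b, c * g x ^ 2 + D x ≤ g' x ^ 2 := fun x hx => by
    nlinarith [sq_nonneg (g' x - w x * g x),
      mul_nonneg (sq_nonneg (g x)) (sub_nonneg.2 (hric x hx))]
  calc c * ∫ x in a..b, g x ^ 2 = ∫ x in a..b, (c * g x ^ 2 + D x) := by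
        rw [intervalIntegral.integral_add ((hg2.intervalIntegrable_of_Icc hab).const_mul c)
          (hDc.intervalIntegrable_of_Icc hab), intervalIntegral.integral_const_mul, hD0, add_zero]
    _ ≤ ∫ x in a..b, g' x ^ 2 :=
        intervalIntegral.integral_mono_on hab
          ((continuousOn_const.mul hg2).add hDc |>.intervalIntegrable_of_Icc hab)
          ((hg'c.pow 2).intervalIntegrable_of_Icc hab) hpt

variable (hg : ∀ x ∈ Icc a b, HasDerivAt g (g' x) x) (hg'c : ContinuousOn g' (Icc a b))
  (hga : g a = 0) (hgb : g b = 0)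
include hg hg'c hga hgb

theorem sq_mul_integral_sq_le_integral_deriv_sq {K : ℝ} (hab : a ≤ b) (hK : 0 < K)
    (hKπ : K * (b - a) < π) :
    K ^ 2 * ∫ x in a..b, g x ^ 2 ≤ ∫ x in a..b, g' x ^ 2 := by
  set θ : ℝ → ℝ := fun x => K * (x - a) + (π - K * (b - a)) / 2
  have hsin : ∀ x ∈ Icc a b, 0 < sin (θ x) := fun x hx => by
    have h0 : 0 ≤ K * (x - a) := mul_nonneg hK.le (sub_nonneg.2 hx.1)
    have h1 : K * (x - a) ≤ K * (b - a) := mul_le_mul_of_nonneg_left (by linarith [hx.2]) hK.le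
    apply sin_pos_of_pos_of_lt_pi <;> simp only [θ] <;> linarith
  have hθ : ∀ x, HasDerivAt θ K x := fun x =>
    ((((hasDerivAt_id x).sub_const a).const_mul K).add_const _).congr_deriv (mul_one K)
  refine mul_integral_sq_le_integral_deriv_sq_of_riccati
    (w := fun x => K * (cos (θ x) / sin (θ x))) (w' := fun x => -K ^ 2 / sin (θ x) ^ 2)
    hab hg (fun x hx => ?_) hg'c ?_ (fun x hx => ?_) hga hgb
  · have hs := (hsin x hx).ne'
    refine ((((hθ x).cos).fun_div (hθ x).sin hs).const_mul K).congr_deriv ?_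
    field_simp
    linear_combination -sin_sq_add_cos_sq (θ x)
  · exact continuousOn_const.div (by fun_prop) fun x hx => pow_ne_zero 2 (hsin x hx).ne'
  · have hs := (hsin x hx).ne'
    apply le_of_eq
    field_simp
    linear_combination sin_sq_add_cos_sq (θ x)

theorem wirtinger_inequality (hab : a < b) :
    (π / (b - a)) ^ 2 * ∫ x in a..b, g x ^ 2 ≤ ∫ x in a..b, g' x ^ 2 := by
  have hL : 0 < b - a := sub_pos.2 hab
  refine le_of_tendsto (x := 𝓝[<] (π / (b - a)))
    ((continuous_pow 2).mul continuous_const).continuousWithinAt ?_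
  filter_upwards [Ioo_mem_nhdsLT (div_pos pi_pos hL)] with K hK
  exact sq_mul_integral_sq_le_integral_deriv_sq hg hg'c hga hgb hab.le hK.1
    ((lt_div_iff₀ hL).1 hK.2)

end Wirtinger

section Moments

variable {a b : ℝ} {f : ℝ → ℝ} (hf : IntervalIntegrable f volume a b)
  (hf2 : IntervalIntegrable (fun x => f x ^ 2) volume a b)
include hf hf2

theorem integral_sub_const_sq (t : ℝ) :
    ∫ x in a..b, (f x - t) ^ 2 =
      (∫ x in a..b, f x ^ 2) - 2 * t * (∫ x in a..b, f x) + t ^ 2 * (b - a) := by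
  have hexp : (fun x => (f x - t) ^ 2) = fun x => (f x ^ 2 - 2 * t * f x) + t ^ 2 := by
    funext x; ring
  rw [hexp, intervalIntegral.integral_add (hf2.sub (hf.const_mul _)) intervalIntegrable_const,
    intervalIntegral.integral_sub hf2 (hf.const_mul _), intervalIntegral.integral_const_mul,
    intervalIntegral.integral_const, smul_eq_mul]
  ring

theorem sq_integral_le_mul_integral_sq (hab : a ≤ b) :
    (∫ x in a..b, f x) ^ 2 ≤ (b - a) * ∫ x in a..b, f x ^ 2 := by
  have hquad : ∀ t : ℝ, 0 ≤ (b - a) * (t * t) + (-2 * ∫ x in a..b, f x) * t +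
      ∫ x in a..b, f x ^ 2 := fun t => by
    have h : 0 ≤ ∫ x in a..b, (f x - t) ^ 2 :=
      intervalIntegral.integral_nonneg hab fun x _ => sq_nonneg (f x - t)
    rw [integral_sub_const_sq hf hf2] at h
    linarith
  have := discrim_le_zero hquad
  rw [discrim] at this
  linarith

end Moments

theorem almost_flat_endpoint_lower_bound_general
    (j₁ j₂ L ε α β : ℝ) (hj : j₁ < j₂) (hL : L = j₂ - j₁)
    (hα : 0 < α)
    (f f' : ℝ → ℝ)
    (hderiv : ∀ x ∈ Set.Icc j₁ j₂, HasDerivAt f (f' x) x)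
    (hf'cont : ContinuousOn f' (Set.Icc j₁ j₂))
    (hfpos : ∀ x ∈ Set.Icc j₁ j₂, 0 ≤ f x)
    (hfj₁ : f j₁ = ε) (hfj₂ : f j₂ = ε)
    (hmass : ∫ x in j₁..j₂, f x ^ 2 = α)
    (henergy : ∫ x in j₁..j₂, f' x ^ 2 ≤ α * β / L ^ 2) :
    ε ≥ (Real.sqrt α / (2 * Real.sqrt L)) * (1 - β / π ^ 2) := by
  have hL0 : 0 < L := hL ▸ sub_pos.2 hj
  have hε : 0 ≤ ε := hfj₁ ▸ hfpos j₁ (left_mem_Icc.2 hj.le)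
  have hfc : ContinuousOn f (Icc j₁ j₂) := fun x hx =>
    (hderiv x hx).continuousAt.continuousWithinAt
  have hf : IntervalIntegrable f volume j₁ j₂ := hfc.intervalIntegrable_of_Icc hj.le
  have hf2 : IntervalIntegrable (fun x => f x ^ 2) volume j₁ j₂ :=
    (hfc.pow 2).intervalIntegrable_of_Icc hj.le
  have hmean : ∫ x in j₁..j₂, f x ≤ √L * √α := by
    rw [← sqrt_mul hL0.le, hL, ← hmass]
    exact (le_abs_self _).trans (abs_le_sqrt (sq_integral_le_mul_integral_sq hf hf2 hj.le))
  have hwirt := wirtinger_inequality (g := fun x => f x - ε)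
    (fun x hx => (hderiv x hx).sub_const ε) hf'cont (by simp [hfj₁]) (by simp [hfj₂]) hj
  rw [integral_sub_const_sq hf hf2, hmass, ← hL] at hwirt
  have key : π ^ 2 * (α - 2 * ε * (√L * √α)) ≤ α * β := by
    have h := hwirt.trans henergy
    rw [div_pow, div_mul_eq_mul_div, div_le_div_iff_of_pos_right (by positivity)] at h
    nlinarith [mul_nonneg (mul_nonneg hε (sub_nonneg.2 hmean)) (sq_nonneg π),
      mul_nonneg (mul_nonneg (sq_nonneg ε) hL0.le) (sq_nonneg π)]
  have hscaled : √α * (√α * (π ^ 2 - β)) ≤ √α * (ε * (2 * √L * π ^ 2)) := by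
    linear_combination key + (π ^ 2 - β) * mul_self_sqrt hα.le
  rw [ge_iff_le, show √α / (2 * √L) * (1 - β / π ^ 2) = √α * (π ^ 2 - β) / (2 * √L * π ^ 2) by
    field_simp, div_le_iff₀ (by positivity)]
  exact le_of_mul_le_mul_left hscaled (sqrt_pos.2 hα)

/-- The 'almost flat' case: if a nonnegative `C¹` function on `[j₁, j₂]` (of length `L`)
takes the value `ε` at both endpoints, has `L²`-mass exactly `α` and gradient energy at
most `αβ/L²` with `0 < β < π²`, then `ε ≥ (√α/(2√L)) · (1 − β/π²)`. -/
theorem almost_flat_endpoint_lower_bound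
    (j₁ j₂ L ε α β : ℝ) (hj : j₁ < j₂) (hL : L = j₂ - j₁)
    (hα : 0 < α) (hβ0 : 0 < β) (hβπ : β < π ^ 2)
    (f f' : ℝ → ℝ)
    (hderiv : ∀ x ∈ Set.Icc j₁ j₂, HasDerivAt f (f' x) x)
    (hf'cont : ContinuousOn f' (Set.Icc j₁ j₂))
    (hfpos : ∀ x ∈ Set.Icc j₁ j₂, 0 ≤ f x)
    (hfj₁ : f j₁ = ε) (hfj₂ : f j₂ = ε)
    (hmass : ∫ x in j₁..j₂, f x ^ 2 = α)
    (henergy : ∫ x in j₁..j₂, f' x ^ 2 ≤ α * β / L ^ 2) :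
    ε ≥ (Real.sqrt α / (2 * Real.sqrt L)) * (1 - β / π ^ 2) :=
  almost_flat_endpoint_lower_bound_general j₁ j₂ L ε α β hj hL hα f f' hderiv hf'cont hfpos hfj₁
    hfj₂ hmass henergy
end
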